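/- The image of 3 in the quotient group ℤ₂×/{±1} topologically generates it: the closure of the subgroup generated by the class of 3 is all of ℤ₂×/{±1}. Equivalently, the closure of the subgroup of ℤ₂× generated by 3 and −1 is all of ℤ₂×. -/
import Mathlib

open PadicInt

/-- `3 ^ (2 ^ (j+1)) = 1 + 2 ^ (j+3) * m` with `m` odd. -/
lemma aux_pow_three (j : ℕ) : ∃ m : ℕ, Odd m ∧ 3 ^ (2 ^ (j + 1)) = 1 + 2 ^ (j + 3) * m := by
  induction j with
  | zero => exact ⟨1, odd_one, by norm_num⟩
  | succ j ih =>
    obtain ⟨m, hm, h⟩ := ih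
    refine ⟨m + 2 ^ (j + 2) * m ^ 2, hm.add_even ⟨2 ^ (j + 1) * m ^ 2, by ring⟩, ?_⟩
    have h2 : 2 ^ (j + 1 + 1) = 2 ^ (j + 1) * 2 := by rw [pow_succ]
    rw [h2, pow_mul, h]; ring

lemma aux_parity (x : ℤ_[2]) : (2 : ℤ_[2]) ∣ x ∨ (2 : ℤ_[2]) ∣ (x - 1) := by
  have h := x.appr_spec 1
  rw [Ideal.mem_span_singleton, pow_one] at h
  have hlt := x.appr_lt 1
  simp only [pow_one] at hlt
  set a := x.appr 1 with ha
  interval_cases a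
  · left; simpa using h
  · right; simpa using h

lemma aux_odd_not_dvd {c : ℤ} (hc : Odd c) : ¬ (2 : ℤ_[2]) ∣ (c : ℤ_[2]) := by
  have h := pow_p_dvd_int_iff (p := 2) 1 c
  simp only [pow_one, Nat.cast_ofNat] at h
  rw [h]
  rw [Int.two_dvd_ne_zero]
  exact Int.odd_iff.mp hc

lemma aux_unit_not_dvd (u : ℤ_[2]ˣ) : ¬ (2 : ℤ_[2]) ∣ (u : ℤ_[2]) := by
  intro h
  have h1 : ‖(u : ℤ_[2])‖ = 1 := isUnit_iff.mp u.isUnit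
  have h2 : ‖(u : ℤ_[2])‖ < 1 := by
    rw [norm_lt_one_iff_dvd]
    exact_mod_cast h
  exact absurd h1 (ne_of_lt h2)

lemma aux_approx (u : ℤ_[2]ˣ) (n : ℕ) :
    ∃ l k : ℕ, (2 : ℤ_[2]) ^ (n + 3) ∣ ((u : ℤ_[2]) - (-1) ^ l * 3 ^ k) := by
  induction n with
  | zero =>
    have h := (u : ℤ_[2]).appr_spec 3
    rw [Ideal.mem_span_singleton] at h
    have h' : (2 : ℤ_[2]) ^ 3 ∣ ((u : ℤ_[2]) - ((u : ℤ_[2]).appr 3 : ℕ)) := by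
      exact_mod_cast h
    have hlt := (u : ℤ_[2]).appr_lt 3
    norm_num at hlt
    have hodd : ¬ 2 ∣ (u : ℤ_[2]).appr 3 := by
      intro ⟨c, hc⟩
      apply aux_unit_not_dvd u
      have h2c : (2 : ℤ_[2]) ∣ (((u : ℤ_[2]).appr 3 : ℕ) : ℤ_[2]) := by
        rw [hc]; push_cast; exact ⟨c, rfl⟩
      have h8 : (2 : ℤ_[2]) ∣ ((u : ℤ_[2]) - ((u : ℤ_[2]).appr 3 : ℕ)) :=
        dvd_trans (dvd_pow_self (2 : ℤ_[2]) three_ne_zero) h'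
      simpa using dvd_add h8 h2c
    have h8 : (2 : ℤ_[2]) ^ 3 ∣ (8 : ℤ_[2]) := by norm_num
    set a := (u : ℤ_[2]).appr 3 with ha
    clear_value a
    interval_cases a
    · exfalso; omega
    · exact ⟨0, 0, by simpa using h'⟩
    · exfalso; omega
    · exact ⟨0, 1, by convert h' using 2; push_cast; ring⟩
    · exfalso; omega
    · refine ⟨1, 1, ?_⟩
      have hh := dvd_add h' h8
      convert hh using 1; push_cast; ring
    · exfalso; omega
    · refine ⟨1, 0, ?_⟩
      have hh := dvd_add h' h8
      convert hh using 1; push_cast; ring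
  | succ n ih =>
    obtain ⟨l, k, hd⟩ := ih
    obtain ⟨t, ht⟩ := hd
    rcases aux_parity t with ⟨s, hs⟩ | h1
    · refine ⟨l, k, ⟨s, ?_⟩⟩
      rw [ht, hs]; ring
    · obtain ⟨m, hmodd, hpow⟩ := aux_pow_three n
      have hpc : (3 : ℤ_[2]) ^ (2 ^ (n + 1)) = 1 + 2 ^ (n + 3) * (m : ℤ_[2]) := by
        exact_mod_cast hpow
      set c : ℤ := (-1) ^ l * 3 ^ k * m with hc
      have hcodd : Odd c := by
        rw [hc]
        exact ((Odd.pow ⟨-1, by ring⟩).mul (Odd.pow ⟨1, by ring⟩)).mul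
          (by exact_mod_cast hmodd.natCast (R := ℤ))
      rcases aux_parity (c : ℤ_[2]) with hcd | hcd
      · exact absurd hcd (aux_odd_not_dvd hcodd)
      · have h2 : (2 : ℤ_[2]) ∣ (t - (c : ℤ_[2])) := by
          have hhh := dvd_sub h1 hcd
          convert hhh using 1; ring
        refine ⟨l, k + 2 ^ (n + 1), ?_⟩
        have key : (u : ℤ_[2]) - (-1) ^ l * 3 ^ (k + 2 ^ (n + 1))
            = 2 ^ (n + 3) * (t - (c : ℤ_[2])) := by
          have hcc : ((c : ℤ) : ℤ_[2]) = (-1) ^ l * 3 ^ k * (m : ℤ_[2]) := by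
            rw [hc]; push_cast; ring
          rw [pow_add, hpc, hcc]
          linear_combination ht
        rw [key]
        obtain ⟨s, hs⟩ := h2
        exact ⟨s, by rw [hs]; ring⟩

lemma aux_isUnit_three : IsUnit (3 : ℤ_[2]) := by
  rw [isUnit_iff]
  refine le_antisymm (norm_le_one _) (not_lt.mp fun h => ?_)
  rw [norm_lt_one_iff_dvd] at h
  exact aux_odd_not_dvd (c := 3) ⟨1, by ring⟩ (by exact_mod_cast h)

/-- The closure of the subgroup of `ℤ₂ˣ` generated by `3` and `-1` is all of `ℤ₂ˣ`;
equivalently, the class of `3` topologically generates `ℤ₂ˣ/{±1}`. -/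
theorem three_topologically_generates :
    (Subgroup.closure {u : ℤ_[2]ˣ | (u : ℤ_[2]) = 3 ∨ (u : ℤ_[2]) = -1}).topologicalClosure
      = ⊤ := by
  set S : Set ℤ_[2]ˣ := {u : ℤ_[2]ˣ | (u : ℤ_[2]) = 3 ∨ (u : ℤ_[2]) = -1} with hS
  set H := Subgroup.closure S with hH
  rw [SetLike.ext'_iff, Subgroup.topologicalClosure_coe, Subgroup.coe_top, ← dense_iff_closure_eq]
  -- elements of H
  have h3mem : aux_isUnit_three.unit ∈ H :=
    Subgroup.subset_closure (Or.inl aux_isUnit_three.unit_spec)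
  have hneg : (-1 : ℤ_[2]ˣ) ∈ H := Subgroup.subset_closure (Or.inr (by simp))
  have hmem : ∀ l k : ℕ, ((-1) ^ l * aux_isUnit_three.unit ^ k : ℤ_[2]ˣ) ∈ H :=
    fun l k => mul_mem (pow_mem hneg l) (pow_mem h3mem k)
  -- density via the embedding of units into ℤ_[2]
  have hind : Topology.IsInducing (Units.val : ℤ_[2]ˣ → ℤ_[2]) :=
    Units.isOpenEmbedding_val.toIsEmbedding.toIsInducing
  intro u
  rw [hind.closure_eq_preimage_closure_image, Set.mem_preimage, Metric.mem_closure_iff]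
  intro ε hε
  obtain ⟨n, hn⟩ := exists_pow_lt_of_lt_one hε (by norm_num : (1 / 2 : ℝ) < 1)
  obtain ⟨l, k, hd⟩ := aux_approx u n
  refine ⟨(((-1) ^ l * aux_isUnit_three.unit ^ k : ℤ_[2]ˣ) : ℤ_[2]),
    ⟨_, hmem l k, rfl⟩, ?_⟩
  have hval : (((-1) ^ l * aux_isUnit_three.unit ^ k : ℤ_[2]ˣ) : ℤ_[2])
      = (-1) ^ l * 3 ^ k := by
    simp [Units.val_mul, Units.val_pow_eq_pow_val, aux_isUnit_three.unit_spec]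
  rw [dist_eq_norm, hval]
  have hd' : ((2 : ℕ) : ℤ_[2]) ^ (n + 3) ∣ ((u : ℤ_[2]) - (-1) ^ l * 3 ^ k) := by
    exact_mod_cast hd
  have hnorm : ‖(u : ℤ_[2]) - (-1) ^ l * 3 ^ k‖ ≤ ((2 : ℕ) : ℝ) ^ (-(n + 3 : ℕ) : ℤ) :=
    (norm_le_pow_iff_mem_span_pow _ (n + 3)).mpr (Ideal.mem_span_singleton.mpr hd')
  refine lt_of_le_of_lt (hnorm.trans ?_) hn
  have : ((2 : ℕ) : ℝ) ^ (-(n + 3 : ℕ) : ℤ) = (1 / 2 : ℝ) ^ (n + 3) := by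
    rw [zpow_neg, zpow_natCast, one_div, inv_pow]
    norm_num
  rw [this]
  exact pow_le_pow_of_le_one (by norm_num) (by norm_num) (Nat.le_add_right n 3)
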